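/- The Choi-type map Φ[1] on 3×3 matrices, Φ[1](ρ) = (1/2)·[[ρ₀₀+ρ₂₂, -ρ₀₁, -ρ₀₂],[-ρ₁₀, ρ₁₁+ρ₀₀, -ρ₁₂],[-ρ₂₀, -ρ₂₁, ρ₂₂+ρ₁₁]], is trace-preserving and positive, and for every pure state π = |ψ⟩⟨ψ| on ℂ³ one has 4·e₂(Φ[1](π)) = 1, where e₂ denotes the second elementary symmetric polynomial of the eigenvalues. -/

import Mathlib

/-!
With `choiWeight a i = 2 a i² + a (i - 1)²` (indices mod 3), a direct computation gives
`x* Φ[1](v v*) x = (∑ i, choiWeight |v| i * |x i|² - |⟨x, v⟩|²) / 2`. Since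
`|⟨x, v⟩| ≤ ∑ i, |v i| |x i|`, positivity on rank-one matrices follows from Cauchy–Schwarz with
the weights `|v i|² / choiWeight |v| i`, whose sum is at most `1` by AM–GM
(`x²y + y²z + z²x ≥ 3xyz`). Every positive semidefinite matrix is a sum of rank-one ones `v v*`,
and Φ[1] is additive. For the last claim, `tr (Φ[1] ρ)² = (tr ρ² + (tr ρ)²) / 4`, which is `1/2`
for a pure state.
-/

open Matrix ComplexOrder

/-- The Choi map Φ[1] on 3×3 matrices. -/
noncomputable def choiMapOne (ρ : Matrix (Fin 3) (Fin 3) ℂ) : Matrix (Fin 3) (Fin 3) ℂ :=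
  (1 / 2 : ℂ) • !![ρ 0 0 + ρ 2 2, -ρ 0 1, -ρ 0 2;
                   -ρ 1 0, ρ 1 1 + ρ 0 0, -ρ 1 2;
                   -ρ 2 0, -ρ 2 1, ρ 2 2 + ρ 1 1]

lemma choiMapOne_add (A B : Matrix (Fin 3) (Fin 3) ℂ) :
    choiMapOne (A + B) = choiMapOne A + choiMapOne B := by
  ext i j
  fin_cases i <;> fin_cases j <;>
    simp only [choiMapOne, Matrix.add_apply, Matrix.smul_apply, of_apply, cons_val', cons_val_zero,
      cons_val_one, cons_val, cons_val_fin_one, smul_eq_mul, Fin.zero_eta, Fin.mk_one,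
      Fin.reduceFinMk] <;>
    ring

noncomputable def choiMapOneAddHom : Matrix (Fin 3) (Fin 3) ℂ →+ Matrix (Fin 3) (Fin 3) ℂ :=
  AddMonoidHom.mk' choiMapOne choiMapOne_add

lemma conjTranspose_choiMapOne (ρ : Matrix (Fin 3) (Fin 3) ℂ) :
    (choiMapOne ρ)ᴴ = choiMapOne ρᴴ := by
  ext i j
  fin_cases i <;> fin_cases j <;> simp [choiMapOne]

lemma Matrix.IsHermitian.choiMapOne {ρ : Matrix (Fin 3) (Fin 3) ℂ} (hρ : ρ.IsHermitian) :
    (choiMapOne ρ).IsHermitian := by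
  rw [IsHermitian, conjTranspose_choiMapOne, hρ.eq]

lemma trace_choiMapOne (ρ : Matrix (Fin 3) (Fin 3) ℂ) : (choiMapOne ρ).trace = ρ.trace := by
  simp only [choiMapOne, smul_of, smul_cons, smul_eq_mul, smul_empty, trace_fin_three, of_apply,
    cons_val', cons_val_zero, cons_val_fin_one, cons_val_one, cons_val]
  ring

lemma trace_choiMapOne_mul_self (ρ : Matrix (Fin 3) (Fin 3) ℂ) :
    (choiMapOne ρ * choiMapOne ρ).trace = ((ρ * ρ).trace + ρ.trace ^ 2) / 4 := by
  simp only [choiMapOne, smul_of, smul_cons, smul_eq_mul, mul_neg, smul_empty, trace_fin_three,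
    of_apply, cons_val', cons_val_zero, cons_val_fin_one, cons_val_one, cons_val, mul_apply,
    Fin.sum_univ_three]
  ring

theorem posSemidef_map_of_posSemidef_vecMulVec {𝕜 n m : Type*} [RCLike 𝕜] [Finite n]
    (Φ : Matrix n n 𝕜 →+ Matrix m m 𝕜) (hΦ : ∀ v : n → 𝕜, (Φ (vecMulVec v (star v))).PosSemidef)
    {A : Matrix n n 𝕜} (hA : A.PosSemidef) : (Φ A).PosSemidef := by
  obtain ⟨k, v, rfl⟩ := posSemidef_iff_eq_sum_vecMulVec.mp hA
  rw [map_sum]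
  exact posSemidef_sum _ fun i _ => hΦ (v i)

lemma div_two_mul_add_le_half {t s : ℝ} (ht : 0 ≤ t) (hs : 0 ≤ s) : t / (2 * t + s) ≤ 1 / 2 := by
  rcases (by positivity : 0 ≤ 2 * t + s).eq_or_lt with h | h
  · rw [← h, div_zero]; norm_num
  · rw [div_le_div_iff₀ h two_pos]; linarith

lemma cyclic_div_sum_le_one {x y z : ℝ} (hx : 0 ≤ x) (hy : 0 ≤ y) (hz : 0 ≤ z) :
    x / (2 * x + z) + y / (2 * y + x) + z / (2 * z + y) ≤ 1 := by
  rcases hx.eq_or_lt with rfl | hx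
  · linarith [div_two_mul_add_le_half hy le_rfl, div_two_mul_add_le_half hz hy,
      zero_div (2 * 0 + z)]
  rcases hy.eq_or_lt with rfl | hy
  · linarith [div_two_mul_add_le_half hx.le hz, div_two_mul_add_le_half hz le_rfl,
      zero_div (2 * 0 + x)]
  rcases hz.eq_or_lt with rfl | hz
  · linarith [div_two_mul_add_le_half hx.le le_rfl, div_two_mul_add_le_half hy.le hx.le,
      zero_div (2 * 0 + y)]
  rw [div_add_div _ _ (by positivity) (by positivity),
    div_add_div _ _ (by positivity) (by positivity), div_le_one (by positivity)]
  nlinarith [mul_nonneg hx.le (sq_nonneg (y - z)), mul_nonneg hy.le (sq_nonneg (z - x)),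
    mul_nonneg hz.le (sq_nonneg (x - y)), mul_nonneg hx.le (sq_nonneg (x - y)),
    mul_nonneg hy.le (sq_nonneg (y - z)), mul_nonneg hz.le (sq_nonneg (z - x)),
    mul_nonneg hx.le (sq_nonneg (x - z)), mul_nonneg hy.le (sq_nonneg (y - x)),
    mul_nonneg hz.le (sq_nonneg (z - y))]

lemma sq_mul_le_div_mul_mul {a d p : ℝ} (had : a ^ 2 ≤ d) :
    (a * p) ^ 2 ≤ a ^ 2 / d * (d * p ^ 2) := by
  rcases eq_or_ne d 0 with rfl | hd
  · have : a = 0 := pow_eq_zero_iff two_ne_zero |>.mp (le_antisymm had (sq_nonneg a))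
    simp [this]
  · exact (by field_simp : (a * p) ^ 2 = a ^ 2 / d * (d * p ^ 2)).le

def choiWeight (a : Fin 3 → ℝ) (i : Fin 3) : ℝ := 2 * a i ^ 2 + a (i - 1) ^ 2

lemma sq_le_choiWeight (a : Fin 3 → ℝ) (i : Fin 3) : a i ^ 2 ≤ choiWeight a i := by
  unfold choiWeight
  nlinarith [sq_nonneg (a i), sq_nonneg (a (i - 1))]

lemma sum_sq_div_choiWeight_le_one (a : Fin 3 → ℝ) : ∑ i, a i ^ 2 / choiWeight a i ≤ 1 := by
  simpa [choiWeight, Fin.sum_univ_three, show (0 - 1 : Fin 3) = 2 from rfl] using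
    cyclic_div_sum_le_one (sq_nonneg (a 0)) (sq_nonneg (a 1)) (sq_nonneg (a 2))

lemma sq_sum_mul_le_sum_choiWeight_mul (a p : Fin 3 → ℝ) :
    (∑ i, a i * p i) ^ 2 ≤ ∑ i, choiWeight a i * p i ^ 2 := by
  have hweight_nonneg (i : Fin 3) : 0 ≤ choiWeight a i := (sq_nonneg _).trans (sq_le_choiWeight a i)
  calc (∑ i, a i * p i) ^ 2 ≤ (∑ i, a i ^ 2 / choiWeight a i) * ∑ i, choiWeight a i * p i ^ 2 :=
        Finset.sum_sq_le_sum_mul_sum_of_sq_le_mul _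
          (fun i _ => div_nonneg (sq_nonneg _) (hweight_nonneg i))
          (fun i _ => mul_nonneg (hweight_nonneg i) (sq_nonneg _))
          fun i _ => sq_mul_le_div_mul_mul (sq_le_choiWeight a i)
    _ ≤ ∑ i, choiWeight a i * p i ^ 2 :=
        mul_le_of_le_one_left (Finset.sum_nonneg fun i _ => mul_nonneg (hweight_nonneg i)
          (sq_nonneg _)) (sum_sq_div_choiWeight_le_one a)

lemma dotProduct_choiMapOne_vecMulVec_mulVec (v x : Fin 3 → ℂ) :
    star x ⬝ᵥ (choiMapOne (vecMulVec v (star v)) *ᵥ x) =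
      (((∑ i, choiWeight (‖v ·‖) i * ‖x i‖ ^ 2 - ‖star x ⬝ᵥ v‖ ^ 2) / 2 : ℝ) : ℂ) := by
  push_cast [choiWeight]
  simp only [← Complex.mul_conj']
  simp only [dotProduct, Pi.star_apply, RCLike.star_def, mulVec, choiMapOne, one_div, vecMulVec,
    of_apply, Matrix.smul_apply, cons_val', cons_val_fin_one, smul_eq_mul, Fin.sum_univ_three,
    cons_val_zero, cons_val_one, cons_val, mul_neg, neg_mul, show (0 - 1 : Fin 3) = 2 from rfl,
    sub_self, Fin.reduceSub, map_add, map_mul, RingHomCompTriple.comp_apply, RingHom.id_apply]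
  ring

lemma posSemidef_choiMapOne_vecMulVec (v : Fin 3 → ℂ) :
    (choiMapOne (vecMulVec v (star v))).PosSemidef := by
  refine .of_dotProduct_mulVec_nonneg (posSemidef_vecMulVec_self_star v).isHermitian.choiMapOne
    fun x => ?_
  rw [dotProduct_choiMapOne_vecMulVec_mulVec, Complex.zero_le_real]
  have hinner : ‖star x ⬝ᵥ v‖ ≤ ∑ i, ‖v i‖ * ‖x i‖ :=
    (norm_sum_le _ _).trans_eq (by simp [mul_comm])
  have hinner_sq := pow_le_pow_left₀ (norm_nonneg _) hinner 2
  have hchoi := sq_sum_mul_le_sum_choiWeight_mul (‖v ·‖) (‖x ·‖)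
  linarith

theorem posSemidef_choiMapOne {ρ : Matrix (Fin 3) (Fin 3) ℂ} (hρ : ρ.PosSemidef) :
    (choiMapOne ρ).PosSemidef :=
  posSemidef_map_of_posSemidef_vecMulVec choiMapOneAddHom posSemidef_choiMapOne_vecMulVec hρ

/-- Φ[1] is trace-preserving and positive, and for every pure state π on ℂ³
    one has 4·e₂(Φ[1](π)) = 1, where e₂(A) = ((Tr A)² - Tr(A²))/2. -/
theorem choiMapOne_properties :
    (∀ ρ : Matrix (Fin 3) (Fin 3) ℂ, (choiMapOne ρ).trace = ρ.trace) ∧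
    (∀ ρ : Matrix (Fin 3) (Fin 3) ℂ, ρ.PosSemidef → (choiMapOne ρ).PosSemidef) ∧
    (∀ π : Matrix (Fin 3) (Fin 3) ℂ, π.PosSemidef → π.trace = 1 → π * π = π →
      4 * (((choiMapOne π).trace ^ 2 - ((choiMapOne π) * (choiMapOne π)).trace) / 2)
        = 1) := by
  refine ⟨trace_choiMapOne, fun _ => posSemidef_choiMapOne, fun π _ htr hidem => ?_⟩
  rw [trace_choiMapOne_mul_self, trace_choiMapOne, hidem, htr]
  norm_num
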